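/- Suppose for each i the coefficient G_i satisfies (8/3)·β ≤ G_i ≤ N for constants 0 < β and β ≤ N. Define step sizes h_i = (ε/G_i)^{1/(r+1)} for a given ε ∈ (0,1), and let m* be the minimal m ∈ ℕ such that Σ_{i=0}^{m-1} h_i ≥ b - a. Then ((8/3)β)^{1/(r+1)}·(b-a)·(1/ε)^{1/(r+1)} ≤ m* < N^{1/(r+1)}·(b-a)·(1/ε)^{1/(r+1)} + 1. -/
import Mathlib


theorem stmt_10 (r : ℕ) (hr : 1 ≤ r) (a b ε β N : ℝ) (hab : a < b)
    (hε0 : 0 < ε) (hε1 : ε < 1) (hβ : 0 < β) (hN : (8 / 3) * β ≤ N)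
    (G : ℕ → ℝ) (hG : ∀ i, (8 / 3) * β ≤ G i ∧ G i ≤ N)
    (mstar : ℕ)
    (hmstar : mstar = sInf {m : ℕ |
      b - a ≤ ∑ i ∈ Finset.range m, (ε / G i) ^ (1 / ((r : ℝ) + 1))}) :
    ((8 / 3) * β) ^ (1 / ((r : ℝ) + 1)) * (b - a) * (1 / ε) ^ (1 / ((r : ℝ) + 1)) ≤ mstar ∧
    (mstar : ℝ) < N ^ (1 / ((r : ℝ) + 1)) * (b - a) * (1 / ε) ^ (1 / ((r : ℝ) + 1)) + 1 := by
  set p : ℝ := 1 / ((r : ℝ) + 1) with hp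
  have hp0 : 0 < p := by positivity
  have hd0 : 0 < (8 / 3) * β := by positivity
  have hN0 : 0 < N := lt_of_lt_of_le hd0 hN
  have hG0 : ∀ i, 0 < G i := fun i => lt_of_lt_of_le hd0 (hG i).1
  have hc0 : 0 < (ε / N) ^ p := Real.rpow_pos_of_pos (by positivity) p
  have hεp : 0 < ε ^ p := Real.rpow_pos_of_pos hε0 p
  have hdp : 0 < ((8 / 3) * β) ^ p := Real.rpow_pos_of_pos hd0 p
  have hNp : 0 < N ^ p := Real.rpow_pos_of_pos hN0 p
  have hterm_lb : ∀ i, (ε / N) ^ p ≤ (ε / G i) ^ p := by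
    intro i
    apply Real.rpow_le_rpow (by positivity) _ hp0.le
    gcongr
    exacts [hG0 i, (hG i).2]
  have hterm_ub : ∀ i, (ε / G i) ^ p ≤ (ε / ((8 / 3) * β)) ^ p := by
    intro i
    apply Real.rpow_le_rpow (div_nonneg hε0.le (hG0 i).le) _ hp0.le
    gcongr
    exact (hG i).1
  have hsum_lb : ∀ m : ℕ, (m : ℝ) * (ε / N) ^ p ≤ ∑ i ∈ Finset.range m, (ε / G i) ^ p := by
    intro m
    calc (m : ℝ) * (ε / N) ^ p = ∑ _i ∈ Finset.range m, (ε / N) ^ p := by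
          rw [Finset.sum_const, Finset.card_range, nsmul_eq_mul]
      _ ≤ _ := Finset.sum_le_sum fun i _ => hterm_lb i
  have hsum_ub : ∀ m : ℕ, (∑ i ∈ Finset.range m, (ε / G i) ^ p)
      ≤ (m : ℝ) * (ε / ((8 / 3) * β)) ^ p := by
    intro m
    calc (∑ i ∈ Finset.range m, (ε / G i) ^ p) ≤ ∑ _i ∈ Finset.range m, (ε / ((8/3)*β)) ^ p :=
          Finset.sum_le_sum fun i _ => hterm_ub i
      _ = (m : ℝ) * (ε / ((8 / 3) * β)) ^ p := by
          rw [Finset.sum_const, Finset.card_range, nsmul_eq_mul]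
  set S : Set ℕ := {m : ℕ | b - a ≤ ∑ i ∈ Finset.range m, (ε / G i) ^ p} with hS
  have hne : S.Nonempty := by
    refine ⟨⌈(b - a) / (ε / N) ^ p⌉₊, ?_⟩
    have h1 : (b - a) / (ε / N) ^ p ≤ (⌈(b - a) / (ε / N) ^ p⌉₊ : ℝ) := Nat.le_ceil _
    have h2 : b - a ≤ (⌈(b - a) / (ε / N) ^ p⌉₊ : ℝ) * (ε / N) ^ p :=
      (div_le_iff₀ hc0).mp h1
    exact h2.trans (hsum_lb _)
  have hmem : mstar ∈ S := hmstar ▸ Nat.sInf_mem hne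
  have hba : 0 < b - a := by linarith
  have hpos : 0 < mstar := by
    rcases Nat.eq_zero_or_pos mstar with h0 | h
    · exfalso
      have := hmem
      rw [h0] at this
      simp only [hS, Set.mem_setOf_eq, Finset.range_zero, Finset.sum_empty] at this
      linarith
    · exact h
  have hεdiv : (ε / N) ^ p = ε ^ p / N ^ p := Real.div_rpow hε0.le hN0.le p
  have hεdiv2 : (ε / ((8 / 3) * β)) ^ p = ε ^ p / ((8 / 3) * β) ^ p :=
    Real.div_rpow hε0.le hd0.le p
  have hinv : (1 / ε) ^ p = 1 / ε ^ p := by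
    rw [Real.div_rpow zero_le_one hε0.le, Real.one_rpow]
  constructor
  · -- lower bound
    have h1 : b - a ≤ (mstar : ℝ) * (ε ^ p / ((8 / 3) * β) ^ p) := by
      rw [← hεdiv2]; exact hmem.trans (hsum_ub mstar)
    rw [← mul_div_assoc, le_div_iff₀ hdp] at h1
    rw [hinv, mul_one_div, div_le_iff₀ hεp]
    nlinarith [h1]
  · -- upper bound
    have hlt : mstar - 1 < mstar := Nat.sub_lt hpos one_pos
    have hnot : (mstar - 1) ∉ S := by
      rw [hmstar] at hlt ⊢
      exact Nat.notMem_of_lt_sInf hlt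
    have hsum : (∑ i ∈ Finset.range (mstar - 1), (ε / G i) ^ p) < b - a := by
      by_contra h
      exact hnot (le_of_not_gt h)
    have hcast : ((mstar - 1 : ℕ) : ℝ) = (mstar : ℝ) - 1 := by
      rw [Nat.cast_sub hpos, Nat.cast_one]
    have h2 : ((mstar : ℝ) - 1) * (ε / N) ^ p < b - a := by
      rw [← hcast]
      exact lt_of_le_of_lt (hsum_lb (mstar - 1)) hsum
    rw [hεdiv, ← mul_div_assoc, div_lt_iff₀ hNp] at h2
    rw [hinv, mul_one_div]
    have h3 : ((mstar : ℝ) - 1) < N ^ p * (b - a) / ε ^ p := by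
      rw [lt_div_iff₀ hεp]
      nlinarith [h2]
    linarith [h3]
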